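/- For every n ≥ 1, the volume V_n = ∫_0^1 ∫_0^{1-y_1} ⋯ ∫_0^{1-y_{n-1}} dy_1⋯dy_n equals A_n/n!, where A_n is Euler's n-th zigzag number. -/

import Mathlib

open MeasureTheory

/-- Euler zigzag numbers, as the Taylor coefficients at `0` of `sec z + tan z`. -/
noncomputable def zigzag (n : ℕ) : ℝ :=
  iteratedDeriv n (fun z : ℝ => (1 + Real.sin z) / Real.cos z) 0

/-- `volRec n x = ∫_0^{1-x} ∫_0^{1-y₁} ⋯ ∫_0^{1-y_{n-1}} dy₁ ⋯ dy_n`, so that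
`volRec n 0` is the iterated integral `∫_0^1 ∫_0^{1-y₁} ⋯ ∫_0^{1-y_{n-1}} dy₁⋯dy_n`. -/
noncomputable def volRec : ℕ → ℝ → ℝ
  | 0, _ => 1
  | n + 1, x => ∫ t in (0 : ℝ)..(1 - x), volRec n t

/-!
Write `V_n = volRec n`. The recursion gives `V_{n+1}' (x) = -V_n (1 - x)` and `V_{n+1} (1) = 0`,
which are solved by the generating function
`∑ V_n (x) tⁿ = (sec t + tan t) cos (x t) - sin (x t)`.
Let `P_n` be its `tⁿ`-coefficient and `Q_n` that of `(sec t + tan t) sin (x t) + cos (x t)`.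
Termwise, `P_{n+1}' = -Q_n` and `Q_{n+1}' = P_n`; `Q_{n+1} (0) = 0`, and
`(sec t + tan t) cos t = 1 + sin t` gives `P_{n+1} (1) = 0`. By induction `P_n (1 - x) = Q_n (x)`
(the difference has zero derivative and vanishes at `0`), hence
`∫₀^{1-x} P_n = Q_{n+1} (1 - x) = P_{n+1} (x)`. So `V_n = P_n`, and
`V_n (0) = P_n (0) = A_n / n!`.
-/

open Finset Filter Topology Real

noncomputable section

def taylorCoeff (f : ℝ → ℝ) (n : ℕ) : ℝ :=
  iteratedDeriv n f 0 / n.factorial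

section TaylorCoeff

@[simp]
theorem taylorCoeff_zero (f : ℝ → ℝ) : taylorCoeff f 0 = f 0 := by
  simp [taylorCoeff]

theorem succ_mul_taylorCoeff_succ (f : ℝ → ℝ) (n : ℕ) :
    (n + 1) * taylorCoeff f (n + 1) = taylorCoeff (deriv f) n := by
  rw [taylorCoeff, taylorCoeff, iteratedDeriv_succ', Nat.factorial_succ]
  push_cast
  field_simp

theorem taylorCoeff_const_succ (c : ℝ) (n : ℕ) : taylorCoeff (fun _ => c) (n + 1) = 0 := by
  simp [taylorCoeff, iteratedDeriv_const]

theorem taylorCoeff_fun_neg (f : ℝ → ℝ) :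
    taylorCoeff (fun x => -f x) = fun n => -taylorCoeff f n := by
  ext n
  simp [taylorCoeff, neg_div]

variable {f g : ℝ → ℝ} {n : ℕ}

theorem taylorCoeff_add (hf : ContDiffAt ℝ n f 0) (hg : ContDiffAt ℝ n g 0) :
    taylorCoeff (f + g) n = taylorCoeff f n + taylorCoeff g n := by
  simp only [taylorCoeff, iteratedDeriv_add hf hg, add_div]

theorem taylorCoeff_mul (hf : ContDiffAt ℝ n f 0) (hg : ContDiffAt ℝ n g 0) :
    taylorCoeff (f * g) n = ∑ p ∈ antidiagonal n, taylorCoeff f p.1 * taylorCoeff g p.2 := by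
  rw [taylorCoeff, iteratedDeriv_mul hf hg, sum_div,
    Nat.sum_antidiagonal_eq_sum_range_succ (fun i j => taylorCoeff f i * taylorCoeff g j)]
  refine sum_congr rfl fun i hi => ?_
  have hin : i ≤ n := Nat.lt_succ_iff.mp (mem_range.mp hi)
  rw [Nat.cast_choose ℝ hin, taylorCoeff, taylorCoeff]
  field_simp

theorem taylorCoeff_congr (h : f =ᶠ[𝓝 0] g) : taylorCoeff f = taylorCoeff g := by
  ext n
  rw [taylorCoeff, taylorCoeff, h.iteratedDeriv_eq n]

end TaylorCoeff

/-- The coefficient of `t ^ n` in `(∑ᵢ u i * t ^ i) * (∑ⱼ v j * (x * t) ^ j)`. -/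
def cauchyCoeff (u v : ℕ → ℝ) (n : ℕ) (x : ℝ) : ℝ :=
  ∑ p ∈ antidiagonal n, u p.1 * v p.2 * x ^ p.2

section CauchyCoeff

variable (u v : ℕ → ℝ) (n : ℕ)

@[simp]
theorem cauchyCoeff_at_zero : cauchyCoeff u v n 0 = u n * v 0 := by
  rw [cauchyCoeff, sum_eq_single_of_mem (n, 0) (by simp)]
  · simp
  · rintro ⟨i, j⟩ hij hne
    have hj : j ≠ 0 := by rintro rfl; simp_all
    simp [hj]

theorem cauchyCoeff_at_one : cauchyCoeff u v n 1 = ∑ p ∈ antidiagonal n, u p.1 * v p.2 := by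
  simp [cauchyCoeff]

theorem cauchyCoeff_fun_neg_right (x : ℝ) :
    cauchyCoeff u (fun j => -v j) n x = -cauchyCoeff u v n x := by
  simp [cauchyCoeff, ← sum_neg_distrib]

@[fun_prop]
theorem continuous_cauchyCoeff : Continuous (cauchyCoeff u v n) := by
  unfold cauchyCoeff
  fun_prop

theorem hasDerivAt_cauchyCoeff_succ (x : ℝ) :
    HasDerivAt (cauchyCoeff u v (n + 1))
      (cauchyCoeff u (fun j => (j + 1) * v (j + 1)) n x) x := by
  have h : HasDerivAt (cauchyCoeff u v (n + 1))
      (∑ p ∈ antidiagonal (n + 1), u p.1 * v p.2 * (p.2 * x ^ (p.2 - 1))) x :=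
    HasDerivAt.fun_sum fun p _ => (hasDerivAt_pow p.2 x).const_mul (u p.1 * v p.2)
  refine h.congr_deriv ?_
  rw [Nat.sum_antidiagonal_succ', cauchyCoeff]
  simp only [CharP.cast_eq_zero, zero_mul, mul_zero, zero_add, Nat.cast_add, Nat.cast_one,
    add_tsub_cancel_right]
  exact sum_congr rfl fun p _ => by ring

theorem hasDerivAt_cauchyCoeff_taylorCoeff_succ (g : ℝ → ℝ) (x : ℝ) :
    HasDerivAt (cauchyCoeff u (taylorCoeff g) (n + 1))
      (cauchyCoeff u (taylorCoeff (deriv g)) n x) x := by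
  simpa only [succ_mul_taylorCoeff_succ] using hasDerivAt_cauchyCoeff_succ u (taylorCoeff g) n x

end CauchyCoeff

def secTan (z : ℝ) : ℝ := (1 + sin z) / cos z

theorem contDiffAt_secTan {n : WithTop ℕ∞} : ContDiffAt ℝ n secTan 0 :=
  (contDiffAt_const.add contDiff_sin.contDiffAt).div contDiff_cos.contDiffAt (by simp)

theorem secTan_mul_cos_eventuallyEq : secTan * cos =ᶠ[𝓝 0] 1 + sin := by
  filter_upwards [continuous_cos.continuousAt.eventually_ne (by simp : cos 0 ≠ 0)] with z hz
  simp [secTan, div_mul_cancel₀ _ hz]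

/-- The coefficient of `t ^ n` in `(sec t + tan t) * cos (x * t) - sin (x * t)`. -/
def volPoly (n : ℕ) (x : ℝ) : ℝ :=
  cauchyCoeff (taylorCoeff secTan) (taylorCoeff cos) n x -
    cauchyCoeff (taylorCoeff 1) (taylorCoeff sin) n x

/-- The coefficient of `t ^ n` in `(sec t + tan t) * sin (x * t) + cos (x * t)`. -/
def volPolyRefl (n : ℕ) (x : ℝ) : ℝ :=
  cauchyCoeff (taylorCoeff secTan) (taylorCoeff sin) n x +
    cauchyCoeff (taylorCoeff 1) (taylorCoeff cos) n x

theorem hasDerivAt_volPoly_succ (n : ℕ) (x : ℝ) :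
    HasDerivAt (volPoly (n + 1)) (-volPolyRefl n x) x := by
  have h := (hasDerivAt_cauchyCoeff_taylorCoeff_succ (taylorCoeff secTan) n cos x).sub
    (hasDerivAt_cauchyCoeff_taylorCoeff_succ (taylorCoeff 1) n sin x)
  rw [deriv_cos', Real.deriv_sin] at h
  refine h.congr_deriv ?_
  rw [taylorCoeff_fun_neg, cauchyCoeff_fun_neg_right, volPolyRefl]
  ring

theorem hasDerivAt_volPolyRefl_succ (n : ℕ) (x : ℝ) :
    HasDerivAt (volPolyRefl (n + 1)) (volPoly n x) x := by
  have h := (hasDerivAt_cauchyCoeff_taylorCoeff_succ (taylorCoeff secTan) n sin x).add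
    (hasDerivAt_cauchyCoeff_taylorCoeff_succ (taylorCoeff 1) n cos x)
  rw [deriv_cos', Real.deriv_sin] at h
  refine h.congr_deriv ?_
  rw [taylorCoeff_fun_neg, cauchyCoeff_fun_neg_right, volPoly]
  ring

theorem continuous_volPoly (n : ℕ) : Continuous (volPoly n) := by
  unfold volPoly
  fun_prop

theorem volPoly_succ_at_one (n : ℕ) : volPoly (n + 1) 1 = 0 := by
  have hsin : ContDiffAt ℝ (n + 1) sin 0 := contDiff_sin.contDiffAt
  have hcos : ContDiffAt ℝ (n + 1) cos 0 := contDiff_cos.contDiffAt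
  have hone : ContDiffAt ℝ (n + 1) (1 : ℝ → ℝ) 0 := contDiffAt_const
  rw [volPoly, cauchyCoeff_at_one, cauchyCoeff_at_one, ← taylorCoeff_mul contDiffAt_secTan hcos,
    ← taylorCoeff_mul hone hsin, taylorCoeff_congr secTan_mul_cos_eventuallyEq,
    taylorCoeff_add hone hsin, one_mul, add_sub_cancel_right]
  exact taylorCoeff_const_succ 1 n

theorem volPolyRefl_succ_at_zero (n : ℕ) : volPolyRefl (n + 1) 0 = 0 := by
  rw [volPolyRefl, cauchyCoeff_at_zero, cauchyCoeff_at_zero,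
    show taylorCoeff 1 (n + 1) = 0 from taylorCoeff_const_succ 1 n]
  simp

theorem volPoly_at_zero (n : ℕ) : volPoly n 0 = taylorCoeff secTan n := by
  simp [volPoly]

theorem volPoly_one_sub (n : ℕ) (x : ℝ) : volPoly n (1 - x) = volPolyRefl n x := by
  induction n generalizing x with
  | zero => simp [volPoly, volPolyRefl, cauchyCoeff, secTan]
  | succ n ih =>
    set r : ℝ → ℝ := fun y => volPoly (n + 1) (1 - y) - volPolyRefl (n + 1) y
    have hr : ∀ y, HasDerivAt r 0 y := by
      intro y
      have h := ((hasDerivAt_volPoly_succ n (1 - y)).comp y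
        ((hasDerivAt_id y).const_sub 1)).sub (hasDerivAt_volPolyRefl_succ n y)
      refine h.congr_deriv ?_
      rw [← ih (1 - y), sub_sub_cancel]
      ring
    have hconst := is_const_of_deriv_eq_zero (fun y => (hr y).differentiableAt)
      (fun y => (hr y).deriv) x 0
    simpa [r, volPoly_succ_at_one, volPolyRefl_succ_at_zero, sub_eq_zero] using hconst

theorem volRec_eq_volPoly (n : ℕ) : volRec n = volPoly n := by
  induction n with
  | zero => ext x; simp [volRec, volPoly, cauchyCoeff, secTan]
  | succ n ih =>
    ext x
    rw [volRec, ih, intervalIntegral.integral_eq_sub_of_hasDerivAt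
      (fun t _ => hasDerivAt_volPolyRefl_succ n t) ((continuous_volPoly n).intervalIntegrable _ _),
      volPolyRefl_succ_at_zero, sub_zero, ← volPoly_one_sub, sub_sub_cancel]

end

theorem zigzag_volume_general (n : ℕ) :
    volRec n 0 = zigzag n / n.factorial := by
  rw [volRec_eq_volPoly, volPoly_at_zero]
  rfl

theorem zigzag_volume (n : ℕ) (hn : 1 ≤ n) :
    volRec n 0 = zigzag n / n.factorial :=
  zigzag_volume_general n
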